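/- arXiv:2405.04284 — 2 statements merged into one kernel-verified Lean document; each statement's English description precedes it below -/
import Mathlib

section
/- Suppose the offspring distribution p has mean m ∈ (0,1) and limsup_n (p_n)^{1/n} < 1. Then there exists c₂ > 1 such that for all s ∈ (1, c₂), the iterates f_n(s) are monotone decreasing in n and f_n(s) ↓ 1 as n → ∞. -/
open MeasureTheory Filter Topology

noncomputable def genFun (p : ℕ → ℝ) (s : ℝ) : ℝ := ∑' j, p j * s ^ j

noncomputable def genFunIter (p : ℕ → ℝ) : ℕ → ℝ → ℝ
  | 0, s => s
  | n + 1, s => genFun p (genFunIter p n s)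

/-!
Since `p n ≤ q ^ n` eventually for some `q < 1`, the generating function `f` is a power series of
radius `> 1`, so it can be differentiated termwise at `1`: `f 1 = 1` and `f' 1 = m ∈ (0, 1)`.
Fixing `m < M < 1`, the difference quotient `(f z - 1) / (z - 1)` lies in `(0, M)` for `z` in some
`(1, c₂)`, so `f` maps `(1, s]` into itself with `f z - 1 ≤ M (z - 1)`; the iterates therefore
decrease and `f_n(s) - 1 ≤ M ^ n (s - 1)`.
-/

open Set Asymptotics

theorem exists_eventually_le_pow_of_limsup_rpow_inv_lt_one {p : ℕ → ℝ} (hp : ∀ n, 0 ≤ p n)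
    (hbdd : IsBoundedUnder (· ≤ ·) atTop fun n : ℕ => p n ^ (n : ℝ)⁻¹)
    (h : limsup (fun n : ℕ => p n ^ (n : ℝ)⁻¹) atTop < 1) :
    ∃ q ∈ Ioo (0 : ℝ) 1, ∀ᶠ n in atTop, p n ≤ q ^ n := by
  obtain ⟨q, hLq, hq1⟩ := exists_between h
  have hlt : ∀ᶠ n in atTop, p n ^ (n : ℝ)⁻¹ < q := eventually_lt_of_limsup_lt hLq hbdd
  obtain ⟨n, hn⟩ := hlt.exists
  refine ⟨q, ⟨(Real.rpow_nonneg (hp n) _).trans_lt hn, hq1⟩, ?_⟩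
  filter_upwards [hlt, eventually_ne_atTop 0] with n hn hn0
  calc p n = (p n ^ (n : ℝ)⁻¹) ^ n := (Real.rpow_inv_natCast_pow (hp n) hn0).symm
    _ ≤ q ^ n := pow_le_pow_left₀ (Real.rpow_nonneg (hp n) _) hn.le n

theorem summable_natCast_mul_norm_mul_pow {p : ℕ → ℝ} {q r : ℝ} (hq : 0 ≤ q)
    (hr : 0 ≤ r) (hqr : q * r < 1) (hpq : ∀ᶠ n in atTop, ‖p n‖ ≤ q ^ n) :
    Summable fun n : ℕ => n * ‖p n‖ * r ^ n := by
  have hgeom : Summable fun n : ℕ => (n : ℝ) ^ 1 * (q * r) ^ n :=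
    summable_pow_mul_geometric_of_norm_lt_one 1 (by
      rwa [Real.norm_of_nonneg (mul_nonneg hq hr)])
  refine summable_of_isBigO_nat hgeom (IsBigO.of_bound 1 ?_)
  filter_upwards [hpq] with n hn
  calc ‖n * ‖p n‖ * r ^ n‖ = n * ‖p n‖ * r ^ n := Real.norm_of_nonneg (by positivity)
    _ ≤ n * q ^ n * r ^ n := by gcongr
    _ = 1 * ‖(n : ℝ) ^ 1 * (q * r) ^ n‖ := by
      rw [one_mul, Real.norm_of_nonneg (by positivity), pow_one, mul_pow, mul_assoc]

theorem hasDerivAt_genFun {p : ℕ → ℝ} {r y : ℝ} (hr : 1 ≤ r)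
    (hsum : Summable fun n : ℕ => n * ‖p n‖ * r ^ n) (hy : |y| < r) :
    HasDerivAt (genFun p) (∑' n, p n * (n * y ^ (n - 1))) y := by
  have hbound : ∀ n : ℕ, ∀ z ∈ Ioo (-r) r,
      ‖p n * (n * z ^ (n - 1))‖ ≤ n * ‖p n‖ * r ^ n := by
    intro n z hz
    have hz' : |z| ≤ r := (abs_lt.2 hz).le
    calc ‖p n * (n * z ^ (n - 1))‖ = n * ‖p n‖ * |z| ^ (n - 1) := by
          simp only [norm_mul, norm_pow, Real.norm_eq_abs, Nat.abs_cast]; ring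
      _ ≤ n * ‖p n‖ * r ^ n := by
          gcongr
          exact (pow_le_pow_left₀ (abs_nonneg z) hz' _).trans
            (pow_le_pow_right₀ hr (n.sub_le 1))
  refine hasDerivAt_tsum_of_isPreconnected hsum isOpen_Ioo isPreconnected_Ioo
    (fun n z _ => ((hasDerivAt_pow n z).const_mul (p n))) hbound (y₀ := 0) ?_ ?_ (abs_lt.1 hy)
  · exact ⟨by linarith, by linarith⟩
  · exact (summable_nat_add_iff 1).1 (by simp)

theorem HasDerivAt.exists_Ioo_mul_sub_lt_sub_lt {f : ℝ → ℝ} {f' x a b : ℝ}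
    (hf : HasDerivAt f f' x) (h : f' ∈ Ioo a b) :
    ∃ c > x, ∀ z ∈ Ioo x c, a * (z - x) < f z - f x ∧ f z - f x < b * (z - x) := by
  have hslope : ∀ᶠ z in 𝓝[>] x, slope f x z ∈ Ioo a b :=
    (hasDerivWithinAt_iff_tendsto_slope' (lt_irrefl x)).1 hf.hasDerivWithinAt
      (isOpen_Ioo.mem_nhds h)
  obtain ⟨c, hc, hsub⟩ := mem_nhdsGT_iff_exists_Ioo_subset.1 hslope
  refine ⟨c, hc, fun z hz => ?_⟩
  have hzx : 0 < z - x := sub_pos.2 hz.1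
  obtain ⟨ha, hb⟩ := hsub hz
  rw [slope_def_field, lt_div_iff₀ hzx] at ha
  rw [slope_def_field, div_lt_iff₀ hzx] at hb
  exact ⟨ha, hb⟩

theorem antitone_iterate_and_tendsto_of_sub_le_mul_sub {f : ℝ → ℝ} {a c M s : ℝ}
    (hM : M < 1) (hf : ∀ z ∈ Ioo a c, a < f z ∧ f z - a ≤ M * (z - a))
    (hs : s ∈ Ioo a c) :
    Antitone (fun n => f^[n] s) ∧ Tendsto (fun n => f^[n] s) atTop (𝓝 a) := by
  have hM0 : 0 ≤ M := by
    obtain ⟨h1, h2⟩ := hf s hs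
    nlinarith [hs.1]
  have hmem : ∀ n, f^[n] s ∈ Ioc a s := by
    intro n
    induction n with
    | zero => exact ⟨hs.1, le_rfl⟩
    | succ n ih =>
      obtain ⟨h1, h2⟩ := hf _ ⟨ih.1, ih.2.trans_lt hs.2⟩
      rw [Function.iterate_succ_apply']
      exact ⟨h1, by nlinarith [ih.1, ih.2]⟩
  have hstep : ∀ n, f^[n + 1] s - a ≤ M * (f^[n] s - a) := fun n => by
    rw [Function.iterate_succ_apply']
    exact (hf _ ⟨(hmem n).1, (hmem n).2.trans_lt hs.2⟩).2
  have hgeom : ∀ n, f^[n] s - a ≤ M ^ n * (s - a) := by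
    intro n
    induction n with
    | zero => simp
    | succ n ih =>
      calc f^[n + 1] s - a ≤ M * (f^[n] s - a) := hstep n
        _ ≤ M * (M ^ n * (s - a)) := mul_le_mul_of_nonneg_left ih hM0
        _ = M ^ (n + 1) * (s - a) := by ring
  refine ⟨antitone_nat_of_succ_le fun n => ?_, ?_⟩
  · nlinarith [hstep n, (hmem n).1]
  · have hupper : Tendsto (fun n => a + M ^ n * (s - a)) atTop (𝓝 a) := by
      simpa using ((tendsto_pow_atTop_nhds_zero_of_lt_one hM0 hM).mul_const (s - a)).const_add a
    exact tendsto_of_tendsto_of_tendsto_of_le_of_le tendsto_const_nhds hupper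
      (fun n => (hmem n).1.le) (fun n => by linarith [hgeom n])

theorem genFunIter_eq_iterate (p : ℕ → ℝ) (n : ℕ) : genFunIter p n = (genFun p)^[n] := by
  induction n with
  | zero => rfl
  | succ n ih => funext s; rw [Function.iterate_succ_apply', ← ih]; rfl

theorem stmt5_general (p : ℕ → ℝ) (m : ℝ)
    (hp_nonneg : ∀ j, 0 ≤ p j) (hp_sum : ∑' j, p j = 1)
    (hm : m = ∑' j : ℕ, (j : ℝ) * p j)
    (hm_pos : 0 < m) (hm_lt : m < 1)
    (hlimsup : Filter.limsup (fun n : ℕ => p n ^ ((n : ℝ)⁻¹)) atTop < 1) :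
    ∃ c₂ > (1 : ℝ), ∀ s ∈ Set.Ioo (1 : ℝ) c₂,
      (Antitone fun n : ℕ => genFunIter p n s) ∧
      Tendsto (fun n : ℕ => genFunIter p n s) atTop (𝓝 1) := by
  have hp_summable : Summable p := by
    by_contra h
    simp [tsum_eq_zero_of_not_summable h] at hp_sum
  have hbdd : IsBoundedUnder (· ≤ ·) atTop fun n : ℕ => p n ^ (n : ℝ)⁻¹ :=
    isBoundedUnder_of ⟨1, fun n => Real.rpow_le_one (hp_nonneg n)
      (hp_sum ▸ hp_summable.le_tsum n fun j _ => hp_nonneg j) (by positivity)⟩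
  obtain ⟨q, ⟨hq0, hq1⟩, hpq⟩ :=
    exists_eventually_le_pow_of_limsup_rpow_inv_lt_one hp_nonneg hbdd hlimsup
  obtain ⟨r, hr1, hrq⟩ := exists_between ((one_lt_inv₀ hq0).2 hq1)
  have hsum : Summable fun n : ℕ => n * ‖p n‖ * r ^ n :=
    summable_natCast_mul_norm_mul_pow hq0.le (by linarith)
      (by rw [← mul_inv_cancel₀ hq0.ne']; gcongr)
      (hpq.mono fun n hn => by rwa [Real.norm_of_nonneg (hp_nonneg n)])
  have hderiv : HasDerivAt (genFun p) m 1 := by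
    simpa [hm, mul_comm] using hasDerivAt_genFun (y := 1) hr1.le hsum (by rwa [abs_one])
  have hf1 : genFun p 1 = 1 := by simp [genFun, hp_sum]
  obtain ⟨M, hmM, hM1⟩ := exists_between hm_lt
  obtain ⟨c₂, hc₂, hc⟩ := hderiv.exists_Ioo_mul_sub_lt_sub_lt ⟨hm_pos, hmM⟩
  refine ⟨c₂, hc₂, fun s hs => ?_⟩
  simp only [genFunIter_eq_iterate]
  refine antitone_iterate_and_tendsto_of_sub_le_mul_sub hM1 (fun z hz => ?_) hs
  obtain ⟨hlower, hupper⟩ := hc z hz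
  rw [hf1] at hlower hupper
  exact ⟨by linarith, hupper.le⟩

/-- if the offspring distribution `p` has mean `m ∈ (0,1)` and
`limsup_n (p_n)^{1/n} < 1`, then there exists `c₂ > 1` such that for all
`s ∈ (1, c₂)` the iterates `f_n(s)` are monotone decreasing in `n` and
`f_n(s) ↓ 1` as `n → ∞`. -/
theorem stmt5 (p : ℕ → ℝ) (m : ℝ)
    (hp_nonneg : ∀ j, 0 ≤ p j) (hp_sum : ∑' j, p j = 1)
    (hm : m = ∑' j : ℕ, (j : ℝ) * p j)
    (hm_summable : Summable fun j : ℕ => (j : ℝ) * p j)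
    (hm_pos : 0 < m) (hm_lt : m < 1)
    (hlimsup : Filter.limsup (fun n : ℕ => p n ^ ((n : ℝ)⁻¹)) atTop < 1) :
    ∃ c₂ > (1 : ℝ), ∀ s ∈ Set.Ioo (1 : ℝ) c₂,
      (Antitone fun n : ℕ => genFunIter p n s) ∧
      Tendsto (fun n : ℕ => genFunIter p n s) atTop (𝓝 1) :=
  stmt5_general p m hp_nonneg hp_sum hm hm_pos hm_lt hlimsup
end

section
/- The Yaglom limit Q_min of the subcritical branching Markov chain is itself a quasi-stationary distribution with eigenvalue m: its probability generating functional satisfies G_{Q_min}[G[h](·)] − G_{Q_min}[f(0)] = m · G_{Q_min}[h] for all h with 0 < inf h ≤ h ≤ 1. -/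
/-!
Evaluated at a fixed `x`, the Yaglom limit gives `G_{Q_min}[G[h]] - G_{Q_min}[f(0)]` as the limit
of `(G_{n+1}[h] - f_{n+1}(0)) / (1 - f_n(0))`, which is the Yaglom ratio at time `n + 1` times
`(1 - f_{n+1}(0)) / (1 - f_n(0))`. Writing `1 - f(t) = (1 - t) D(t)` with
`D(t) = ∑ p_j (1 + t + ⋯ + t^{j-1}) ≤ m`, this last ratio is `D(f_n(0))`; since
`1 - f_n(0) ≤ m^n → 0`, it tends to `D(1) = m`.
-/

open MeasureTheory Filter Topology

/-- Admissible test functions: measurable `h` with `0 < inf h ≤ h ≤ 1`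
(the class 𝒱₀(ℝ)). -/
def Adm (h : ℝ → ℝ) : Prop :=
  Measurable h ∧ (∃ ε > (0 : ℝ), ∀ x, ε ≤ h x) ∧ ∀ x, h x ≤ 1

open Set Finset

lemma hasSum_of_tsum_eq_of_ne_zero {ι α : Type*} [AddCommMonoid α] [TopologicalSpace α]
    {f : ι → α} {a : α} (h : ∑' j, f j = a) (ha : a ≠ 0) :
    HasSum f a := by
  by_cases hf : Summable f
  · exact h ▸ hf.hasSum
  · exact absurd (h ▸ tsum_eq_zero_of_not_summable hf) ha

lemma geom_sum_le_of_mem_Icc {R : Type*} [Semiring R] [PartialOrder R] [IsOrderedRing R] {t : R}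
    (ht : t ∈ Icc (0 : R) 1) (j : ℕ) :
    ∑ i ∈ range j, t ^ i ≤ j := by
  simpa using Finset.sum_le_sum fun i (_ : i ∈ range j) => pow_le_one₀ ht.1 ht.2

/-- `(1 - f(t)) / (1 - t)`, written as a series so that it is also defined at `t = 1`, where it is
the mean offspring number. -/
noncomputable def genFunSlope (p : ℕ → ℝ) (t : ℝ) : ℝ :=
  ∑' j, p j * ∑ i ∈ range j, t ^ i

section GeneratingFunction

variable {p : ℕ → ℝ} {m t : ℝ}

lemma genFunIter_succ_apply (p : ℕ → ℝ) (n : ℕ) (s : ℝ) :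
    genFunIter p (n + 1) s = genFunIter p n (genFun p s) := by
  induction n with
  | zero => rfl
  | succ n ih => exact congrArg (genFun p) ih

lemma genFun_zero (p : ℕ → ℝ) : genFun p 0 = p 0 := by
  rw [genFun, tsum_eq_single 0 fun j hj => by simp [zero_pow hj]]
  simp

lemma summable_genFun_terms (hp0 : ∀ j, 0 ≤ p j) (hp : Summable p) (ht : t ∈ Icc (0 : ℝ) 1) :
    Summable fun j => p j * t ^ j :=
  hp.of_nonneg_of_le (fun j => mul_nonneg (hp0 j) (pow_nonneg ht.1 j))
    fun j => mul_le_of_le_one_right (hp0 j) (pow_le_one₀ ht.1 ht.2)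

lemma genFun_mem_Icc (hp0 : ∀ j, 0 ≤ p j) (hp : HasSum p 1) (ht : t ∈ Icc (0 : ℝ) 1) :
    genFun p t ∈ Icc (0 : ℝ) 1 :=
  ⟨tsum_nonneg fun j => mul_nonneg (hp0 j) (pow_nonneg ht.1 j),
    hp.tsum_eq ▸ (summable_genFun_terms hp0 hp.summable ht).tsum_le_tsum
      (fun j => mul_le_of_le_one_right (hp0 j) (pow_le_one₀ ht.1 ht.2)) hp.summable⟩

lemma genFunSlope_terms_le (hp0 : ∀ j, 0 ≤ p j) (ht : t ∈ Icc (0 : ℝ) 1) (j : ℕ) :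
    p j * ∑ i ∈ range j, t ^ i ≤ j * p j := by
  rw [mul_comm (j : ℝ)]
  exact mul_le_mul_of_nonneg_left (geom_sum_le_of_mem_Icc ht j) (hp0 j)

lemma genFunSlope_terms_nonneg (hp0 : ∀ j, 0 ≤ p j) (ht : 0 ≤ t) (j : ℕ) :
    0 ≤ p j * ∑ i ∈ range j, t ^ i :=
  mul_nonneg (hp0 j) (Finset.sum_nonneg fun i _ => pow_nonneg ht i)

lemma summable_genFunSlope_terms (hp0 : ∀ j, 0 ≤ p j) (hmean : Summable fun j : ℕ => (j : ℝ) * p j)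
    (ht : t ∈ Icc (0 : ℝ) 1) : Summable fun j => p j * ∑ i ∈ range j, t ^ i :=
  hmean.of_nonneg_of_le (genFunSlope_terms_nonneg hp0 ht.1) (genFunSlope_terms_le hp0 ht)

lemma one_sub_genFun (hp0 : ∀ j, 0 ≤ p j) (hp : HasSum p 1) (ht : t ∈ Icc (0 : ℝ) 1) :
    1 - genFun p t = (1 - t) * genFunSlope p t := by
  have hterm (j : ℕ) : p j - p j * t ^ j = (1 - t) * (p j * ∑ i ∈ range j, t ^ i) := by
    linear_combination p j * geom_sum_mul t j
  rw [genFunSlope, ← tsum_mul_left, ← tsum_congr hterm,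
    hp.summable.tsum_sub (summable_genFun_terms hp0 hp.summable ht), hp.tsum_eq, genFun]

lemma genFunSlope_le (hp0 : ∀ j, 0 ≤ p j) (hmean : HasSum (fun j : ℕ => (j : ℝ) * p j) m)
    (ht : t ∈ Icc (0 : ℝ) 1) : genFunSlope p t ≤ m :=
  hasSum_le (genFunSlope_terms_le hp0 ht)
    (summable_genFunSlope_terms hp0 hmean.summable ht).hasSum hmean

lemma genFunSlope_pos (hp0 : ∀ j, 0 ≤ p j) (hmean : HasSum (fun j : ℕ => (j : ℝ) * p j) m)
    (hm : 0 < m) (ht : t ∈ Icc (0 : ℝ) 1) : 0 < genFunSlope p t := by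
  obtain ⟨J, hJ⟩ : ∃ J : ℕ, 0 < (J : ℝ) * p J := by
    by_contra! h
    exact hm.not_ge (hasSum_le h hmean hasSum_zero)
  have hJ1 : 0 < J := Nat.pos_of_ne_zero fun hJ0 => by simp [hJ0] at hJ
  refine (summable_genFunSlope_terms hp0 hmean.summable ht).tsum_pos
    (genFunSlope_terms_nonneg hp0 ht.1) J (mul_pos (pos_of_mul_pos_right hJ J.cast_nonneg) ?_)
  exact lt_of_lt_of_le one_pos
    (Finset.single_le_sum (f := (t ^ ·)) (fun i _ => pow_nonneg ht.1 i) (mem_range.2 hJ1))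

lemma tendsto_genFunSlope (hp0 : ∀ j, 0 ≤ p j) (hmean : HasSum (fun j : ℕ => (j : ℝ) * p j) m) :
    Tendsto (genFunSlope p) (𝓝[Icc 0 1] 1) (𝓝 m) := by
  have hm : m = ∑' j, p j * ∑ i ∈ range j, (1 : ℝ) ^ i := by
    simp [hmean.tsum_eq.symm, mul_comm]
  rw [hm]
  refine tendsto_tsum_of_dominated_convergence hmean.summable (fun j => ?_) ?_
  · exact ((tendsto_finsetSum _ fun i _ => (continuous_pow i).continuousAt.tendsto).mono_left
      nhdsWithin_le_nhds).const_mul _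
  · filter_upwards [self_mem_nhdsWithin] with t ht j
    rw [Real.norm_of_nonneg (genFunSlope_terms_nonneg hp0 ht.1 j)]
    exact genFunSlope_terms_le hp0 ht j

lemma genFunIter_mem_Icc (hp0 : ∀ j, 0 ≤ p j) (hp : HasSum p 1) {s : ℝ}
    (hs : s ∈ Icc (0 : ℝ) 1) (n : ℕ) : genFunIter p n s ∈ Icc (0 : ℝ) 1 := by
  induction n with
  | zero => exact hs
  | succ n ih => exact genFun_mem_Icc hp0 hp ih

lemma genFunIter_lt_one (hp0 : ∀ j, 0 ≤ p j) (hp : HasSum p 1)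
    (hmean : HasSum (fun j : ℕ => (j : ℝ) * p j) m) (hm : 0 < m) {s : ℝ}
    (hs : s ∈ Ico (0 : ℝ) 1) (n : ℕ) : genFunIter p n s < 1 := by
  induction n with
  | zero => exact hs.2
  | succ n ih =>
    have hx := genFunIter_mem_Icc hp0 hp (Ico_subset_Icc_self hs) n
    have hfactor := one_sub_genFun hp0 hp hx
    have hslope := genFunSlope_pos hp0 hmean hm hx
    change genFun p _ < 1
    nlinarith

lemma one_sub_genFunIter_le (hp0 : ∀ j, 0 ≤ p j) (hp : HasSum p 1)
    (hmean : HasSum (fun j : ℕ => (j : ℝ) * p j) m) {s : ℝ} (hs : s ∈ Icc (0 : ℝ) 1) (n : ℕ) :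
    1 - genFunIter p n s ≤ m ^ n * (1 - s) := by
  induction n with
  | zero => simp [genFunIter]
  | succ n ih =>
    have hx := genFunIter_mem_Icc hp0 hp hs n
    calc 1 - genFunIter p (n + 1) s
        = (1 - genFunIter p n s) * genFunSlope p (genFunIter p n s) := one_sub_genFun hp0 hp hx
      _ ≤ m ^ n * (1 - s) * m :=
        mul_le_mul ih (genFunSlope_le hp0 hmean hx)
          (tsum_nonneg (genFunSlope_terms_nonneg hp0 hx.1)) (by linarith [ih, hx.2])
      _ = m ^ (n + 1) * (1 - s) := by ring

lemma tendsto_genFunIter_nhdsWithin_one (hp0 : ∀ j, 0 ≤ p j) (hp : HasSum p 1)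
    (hmean : HasSum (fun j : ℕ => (j : ℝ) * p j) m) (hm : m < 1) {s : ℝ}
    (hs : s ∈ Icc (0 : ℝ) 1) :
    Tendsto (fun n => genFunIter p n s) atTop (𝓝[Icc 0 1] 1) := by
  have hm0 : 0 ≤ m := hmean.nonneg fun j => mul_nonneg j.cast_nonneg (hp0 j)
  have hlower : Tendsto (fun n => 1 - m ^ n * (1 - s)) atTop (𝓝 1) := by
    simpa using ((tendsto_pow_atTop_nhds_zero_of_lt_one hm0 hm).mul_const (1 - s)).const_sub 1
  refine tendsto_nhdsWithin_iff.2 ⟨tendsto_of_tendsto_of_tendsto_of_le_of_le hlower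
    tendsto_const_nhds (fun n => ?_) (fun n => (genFunIter_mem_Icc hp0 hp hs n).2),
    Eventually.of_forall (genFunIter_mem_Icc hp0 hp hs)⟩
  linarith [one_sub_genFunIter_le hp0 hp hmean hs n]

lemma tendsto_one_sub_genFunIter_succ_div (hp0 : ∀ j, 0 ≤ p j) (hp : HasSum p 1)
    (hmean : HasSum (fun j : ℕ => (j : ℝ) * p j) m) (hm0 : 0 < m) (hm1 : m < 1) {s : ℝ}
    (hs : s ∈ Ico (0 : ℝ) 1) :
    Tendsto (fun n => (1 - genFunIter p (n + 1) s) / (1 - genFunIter p n s)) atTop (𝓝 m) := by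
  refine ((tendsto_genFunSlope hp0 hmean).comp
    (tendsto_genFunIter_nhdsWithin_one hp0 hp hmean hm1 (Ico_subset_Icc_self hs))).congr
    fun n => ?_
  have hlt := genFunIter_lt_one hp0 hp hmean hm0 hs n
  rw [Function.comp_apply, eq_div_iff (by linarith), mul_comm]
  exact (one_sub_genFun hp0 hp (genFunIter_mem_Icc hp0 hp (Ico_subset_Icc_self hs) n)).symm

end GeneratingFunction

theorem stmt16_general (p : ℕ → ℝ) (m : ℝ)
    (hp_nonneg : ∀ j, 0 ≤ p j) (hp_sum : ∑' j, p j = 1)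
    (hm : m = ∑' j : ℕ, (j : ℝ) * p j) (hm_pos : 0 < m) (hm_lt : m < 1)
    (hp0 : 0 < p 0)
    (G : ℕ → (ℝ → ℝ) → ℝ → ℝ)
    (hGsemi : ∀ n h x, G (n + 1) h x = G n (fun y => G 1 h y) x)
    (hGAdm : ∀ n h, Adm h → Adm (G n h))
    (hGconst : ∀ n : ℕ, ∀ s ∈ Set.Icc (0 : ℝ) 1, ∀ x : ℝ,
      G n (fun _ => s) x = genFunIter p n s)
    (GQmin : (ℝ → ℝ) → ℝ)
    (hYaglom : ∀ h, Adm h → ∀ x : ℝ,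
      Tendsto (fun n : ℕ => (G n h x - genFunIter p n 0) / (1 - genFunIter p n 0))
        atTop (𝓝 (GQmin h))) :
    ∀ h, Adm h →
      GQmin (fun x => G 1 h x) - GQmin (fun _ => genFun p 0) = m * GQmin h := by
  intro h hA
  have hp : HasSum p 1 := hasSum_of_tsum_eq_of_ne_zero hp_sum one_ne_zero
  have hmean : HasSum (fun j : ℕ => (j : ℝ) * p j) m :=
    hasSum_of_tsum_eq_of_ne_zero hm.symm hm_pos.ne'
  have hzero : (0 : ℝ) ∈ Ico (0 : ℝ) 1 := ⟨le_rfl, one_pos⟩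
  have hf0 : genFun p 0 ∈ Icc (0 : ℝ) 1 :=
    genFun_mem_Icc hp_nonneg hp (Ico_subset_Icc_self hzero)
  have hconst : Adm fun _ => genFun p 0 :=
    ⟨measurable_const, ⟨p 0, hp0, fun _ => (genFun_zero p).ge⟩, fun _ => hf0.2⟩
  have hGh := hYaglom _ (hGAdm 1 h hA) 0
  have hGf0 := hYaglom _ hconst 0
  have hh := (hYaglom h hA 0).comp (tendsto_add_atTop_nat 1)
  have hratio := tendsto_one_sub_genFunIter_succ_div hp_nonneg hp hmean hm_pos hm_lt hzero
  refine tendsto_nhds_unique (hGh.sub hGf0) ((hratio.mul hh).congr fun n => ?_)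
  have hn := genFunIter_lt_one hp_nonneg hp hmean hm_pos hzero n
  have hn1 := genFunIter_lt_one hp_nonneg hp hmean hm_pos hzero (n + 1)
  rw [Function.comp_apply, hGsemi, hGconst n _ hf0, ← genFunIter_succ_apply]
  field_simp [sub_ne_zero.2 hn.ne', sub_ne_zero.2 hn1.ne']
  ring

/-- the Yaglom limit `Q_min` of the subcritical branching Markov chain
is itself a quasi-stationary distribution with eigenvalue `m`: its p.g.fl.
`G_{Q_min}[h] = lim_n (G_n[h](x) - f_n(0))/(1 - f_n(0))` (for every `x`) satisfies
`G_{Q_min}[G[h](·)] - G_{Q_min}[f(0)] = m · G_{Q_min}[h]` for all admissible `h`. -/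
theorem stmt16 (p : ℕ → ℝ) (m : ℝ)
    (hp_nonneg : ∀ j, 0 ≤ p j) (hp_sum : ∑' j, p j = 1)
    (hm : m = ∑' j : ℕ, (j : ℝ) * p j) (hm_pos : 0 < m) (hm_lt : m < 1)
    (hp0 : 0 < p 0)
    (G : ℕ → (ℝ → ℝ) → ℝ → ℝ)
    (hG0 : ∀ h x, G 0 h x = h x)
    (hGsemi : ∀ n h x, G (n + 1) h x = G n (fun y => G 1 h y) x)
    (hGAdm : ∀ n h, Adm h → Adm (G n h))
    (hGconst : ∀ n : ℕ, ∀ s ∈ Set.Icc (0 : ℝ) 1, ∀ x : ℝ,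
      G n (fun _ => s) x = genFunIter p n s)
    (GQmin : (ℝ → ℝ) → ℝ)
    (hYaglom : ∀ h, Adm h → ∀ x : ℝ,
      Tendsto (fun n : ℕ => (G n h x - genFunIter p n 0) / (1 - genFunIter p n 0))
        atTop (𝓝 (GQmin h))) :
    ∀ h, Adm h →
      GQmin (fun x => G 1 h x) - GQmin (fun _ => genFun p 0) = m * GQmin h :=
  stmt16_general p m hp_nonneg hp_sum hm hm_pos hm_lt hp0 G hGsemi hGAdm hGconst GQmin hYaglom
end
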